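/- Let π̂ = Σ_{j=1}^M π̂_j δ(x̂_{1,j},…,x̂_{N,j}) be an optimal plan for the MOT problem, i.e. a minimizer of Φ over Π(μ¹,…,μ^N). Then the pushforward ν̂ = (M_λ)_# π̂ = Σ_{j=1}^M π̂_j δ(m̂_j), where m̂_j = Σ_{i=1}^N λ_i x̂_{i,j}, is an optimal Wasserstein-2 barycenter, i.e. it minimizes Ψ(ν) = Σ_i λ_i W₂²(μ^i, ν) over all probability measures ν on ℝ^d. -/

import Mathlib

open MeasureTheory
open scoped ENNReal

noncomputable section

/-- Points of the `d`-dimensional Euclidean space. -/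
abbrev Pt (d : ℕ) := EuclideanSpace ℝ (Fin d)

/-- A measure is finitely supported if it vanishes outside a finite set. -/
def FinitelySupported {α : Type*} [MeasurableSpace α] (μ : Measure α) : Prop :=
  ∃ s : Finset α, μ ((s : Set α)ᶜ) = 0

/-- `λ` lies in the open probability simplex. -/
def InSimplex {N : ℕ} (l : Fin N → ℝ) : Prop :=
  (∀ i, 0 < l i) ∧ ∑ i, l i = 1

/-- `π` is a multi-marginal transport plan with marginals `μ i`. -/
def IsPlan {d N : ℕ} (μ : Fin N → Measure (Pt d)) (π : Measure (Fin N → Pt d)) : Prop :=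
  IsProbabilityMeasure π ∧ ∀ i, π.map (fun x => x i) = μ i

/-- The multi-marginal optimal transport cost `Φ(π)`. -/
def MOT {d N : ℕ} (l : Fin N → ℝ) (π : Measure (Fin N → Pt d)) : ℝ≥0∞ :=
  ∫⁻ x, ∑ s : Fin N, ∑ t : Fin N,
    (if s < t then ENNReal.ofReal (l s * l t * ‖x s - x t‖ ^ 2) else 0) ∂π

/-- `π` is a coupling of `μ` and `ν`. -/
def IsCoupling {α : Type*} [MeasurableSpace α] (μ ν : Measure α) (π : Measure (α × α)) : Prop :=
  IsProbabilityMeasure π ∧ π.map Prod.fst = μ ∧ π.map Prod.snd = ν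

/-- The squared Wasserstein-2 distance: the optimal squared-Euclidean transport cost
over all couplings. -/
def W2sq {d : ℕ} (μ ν : Measure (Pt d)) : ℝ≥0∞ :=
  sInf { c : ℝ≥0∞ | ∃ π : Measure (Pt d × Pt d), IsCoupling μ ν π ∧
    c = ∫⁻ p, ENNReal.ofReal (‖p.1 - p.2‖ ^ 2) ∂π }

/-- The barycenter objective `Ψ(ν) = ∑ i λ i * W₂²(μ i, ν)`. -/
def Psi {d N : ℕ} (l : Fin N → ℝ) (μ : Fin N → Measure (Pt d)) (ν : Measure (Pt d)) : ℝ≥0∞ :=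
  ∑ i, ENNReal.ofReal (l i) * W2sq (μ i) ν

/-- The `λ`-weighted mean map `M_λ`. -/
def wmean {d N : ℕ} (l : Fin N → ℝ) (x : Fin N → Pt d) : Pt d :=
  ∑ i, l i • x i

/-- The support-as-atoms of a measure. -/
def msupport {α : Type*} [MeasurableSpace α] (μ : Measure α) : Set α :=
  {x | μ {x} ≠ 0}

/-!
Pointwise, `∑_{s<t} λ_s λ_t ‖x_s - x_t‖² = ∑_i λ_i ‖x_i - M_λ x‖² ≤ ∑_i λ_i ‖x_i - y‖²` for
every `y` (the weighted mean minimises the weighted sum of squared distances).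

The identity shows `Ψ(M_λ # π) ≤ Φ(π)` for every plan `π`: the map `x ↦ (x_i, M_λ x)` pushes `π`
to a coupling of `μ^i` and `M_λ # π`. The inequality shows `inf Φ ≤ Ψ(ν)` for every `ν`: couplings
`γ_i` of `μ^i` and `ν` glue along their common marginal `ν` (disintegrate each `γ_i` over `ν` and
take the product of the conditional kernels) into a plan `π` with `Φ(π) ≤ ∑_i λ_i cost(γ_i)`.
Hence `Ψ(M_λ # π̂) ≤ Φ(π̂) = inf Φ ≤ Ψ(ν)`.
-/
open scoped InnerProductSpace

section WeightedVariance

variable {ι E : Type*} [Fintype ι] [NormedAddCommGroup E] [InnerProductSpace ℝ E]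
  {l : ι → ℝ}

theorem sum_mul_norm_sub_sq_eq_add (hl : ∑ i, l i = 1) (x : ι → E) (y : E) :
    ∑ i, l i * ‖x i - y‖ ^ 2
      = ∑ i, l i * ‖x i - ∑ j, l j • x j‖ ^ 2 + ‖∑ j, l j • x j - y‖ ^ 2 := by
  set m := ∑ j, l j • x j
  have hcentered : ∑ i, l i • (x i - m) = 0 := by
    simp only [smul_sub, Finset.sum_sub_distrib, ← Finset.sum_smul]
    rw [hl, one_smul, sub_self]
  calc ∑ i, l i * ‖x i - y‖ ^ 2
      = ∑ i, (l i * ‖x i - m‖ ^ 2 + 2 * ⟪l i • (x i - m), m - y⟫_ℝ + l i * ‖m - y‖ ^ 2) := by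
        refine Finset.sum_congr rfl fun i _ => ?_
        rw [← sub_add_sub_cancel (x i) m y, norm_add_sq_real, real_inner_smul_left]
        ring
    _ = _ := by
        rw [Finset.sum_add_distrib, Finset.sum_add_distrib, ← Finset.mul_sum, ← sum_inner,
          hcentered, inner_zero_left, ← Finset.sum_mul, hl]
        ring

theorem sum_mul_norm_sub_wmean_sq_le (hl : ∑ i, l i = 1) (x : ι → E) (y : E) :
    ∑ i, l i * ‖x i - ∑ j, l j • x j‖ ^ 2 ≤ ∑ i, l i * ‖x i - y‖ ^ 2 := by
  rw [sum_mul_norm_sub_sq_eq_add hl x y]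
  exact le_add_of_nonneg_right (sq_nonneg _)

theorem sum_sum_mul_norm_sub_sq_eq (hl : ∑ i, l i = 1) (x : ι → E) :
    ∑ s, ∑ t, l s * l t * ‖x s - x t‖ ^ 2 = 2 * ∑ i, l i * ‖x i - ∑ j, l j • x j‖ ^ 2 := by
  set V := ∑ i, l i * ‖x i - ∑ j, l j • x j‖ ^ 2
  calc ∑ s, ∑ t, l s * l t * ‖x s - x t‖ ^ 2
      = ∑ s, l s * (V + ‖∑ j, l j • x j - x s‖ ^ 2) := by
        refine Finset.sum_congr rfl fun s _ => ?_
        rw [← sum_mul_norm_sub_sq_eq_add hl x (x s), Finset.mul_sum]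
        exact Finset.sum_congr rfl fun t _ => by rw [norm_sub_rev]; ring
    _ = 2 * V := by
        simp only [mul_add, Finset.sum_add_distrib, ← Finset.sum_mul, hl, norm_sub_rev _ (x _)]
        ring

end WeightedVariance

theorem sum_sum_eq_two_nsmul_sum_sum_ite_lt {ι M : Type*} [Fintype ι] [LinearOrder ι]
    [AddCommMonoid M] (F : ι → ι → M) (hsymm : ∀ s t, F s t = F t s) (hdiag : ∀ s, F s s = 0) :
    ∑ s, ∑ t, F s t = 2 • ∑ s, ∑ t, (if s < t then F s t else 0) := by
  have hsplit : ∑ s, ∑ t, F s t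
      = ∑ s, ∑ t, (if s < t then F s t else 0) + ∑ s, ∑ t, (if t < s then F s t else 0) := by
    simp only [← Finset.sum_add_distrib]
    refine Finset.sum_congr rfl fun s _ => Finset.sum_congr rfl fun t _ => ?_
    rcases lt_trichotomy s t with h | rfl | h
    · simp [h, h.not_gt]
    · simp [hdiag]
    · simp [h, h.not_gt]
  have hswap : ∑ s, ∑ t, (if t < s then F s t else 0)
      = ∑ s, ∑ t, (if s < t then F s t else 0) := by
    rw [Finset.sum_comm]
    simp only [hsymm]
  rw [hsplit, hswap, two_nsmul]

@[fun_prop]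
theorem measurable_wmean {d N : ℕ} (l : Fin N → ℝ) : Measurable (wmean (d := d) l) :=
  (continuous_finsetSum _ fun i _ => (continuous_apply i).const_smul (l i)).measurable

theorem mot_eq_lintegral {d N : ℕ} (l : Fin N → ℝ) (hl : InSimplex l) (π : Measure (Fin N → Pt d)) :
    MOT l π = ∫⁻ x, ENNReal.ofReal (∑ i, l i * ‖x i - wmean l x‖ ^ 2) ∂π := by
  refine lintegral_congr fun x => ?_
  have hpairs : ∑ s, ∑ t, (if s < t then l s * l t * ‖x s - x t‖ ^ 2 else 0)
      = ∑ i, l i * ‖x i - wmean l x‖ ^ 2 := by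
    have h := sum_sum_eq_two_nsmul_sum_sum_ite_lt (fun s t => l s * l t * ‖x s - x t‖ ^ 2)
      (fun s t => by rw [norm_sub_rev]; ring) (fun s => by simp)
    rw [sum_sum_mul_norm_sub_sq_eq hl.2, nsmul_eq_mul, Nat.cast_ofNat] at h
    rw [wmean]
    linarith
  have hnonneg : ∀ s t, 0 ≤ if s < t then l s * l t * ‖x s - x t‖ ^ 2 else 0 := fun s t => by
    split_ifs
    · exact mul_nonneg (mul_nonneg (hl.1 s).le (hl.1 t).le) (sq_nonneg _)
    · exact le_rfl
  rw [← hpairs, ENNReal.ofReal_sum_of_nonneg fun s _ => Finset.sum_nonneg fun t _ => hnonneg s t]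
  refine Finset.sum_congr rfl fun s _ => ?_
  rw [ENNReal.ofReal_sum_of_nonneg fun t _ => hnonneg s t]
  refine Finset.sum_congr rfl fun t _ => ?_
  split_ifs <;> simp

theorem lintegral_ofReal_sum_mul {α ι : Type*} [MeasurableSpace α] [Fintype ι] (ρ : Measure α)
    {l : ι → ℝ} (hl : ∀ i, 0 ≤ l i) {f : ι → α → ℝ} (hf : ∀ i, Measurable (f i))
    (hf0 : ∀ i a, 0 ≤ f i a) :
    ∫⁻ a, ENNReal.ofReal (∑ i, l i * f i a) ∂ρ
      = ∑ i, ENNReal.ofReal (l i) * ∫⁻ a, ENNReal.ofReal (f i a) ∂ρ := by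
  simp_rw [ENNReal.ofReal_sum_of_nonneg fun i _ => mul_nonneg (hl i) (hf0 i _),
    ENNReal.ofReal_mul (hl _)]
  rw [lintegral_finsetSum _ fun i _ => (hf i).ennreal_ofReal.const_mul _]
  simp_rw [lintegral_const_mul _ (hf _).ennreal_ofReal]

theorem w2sq_map_le_lintegral {α : Type*} [MeasurableSpace α] {d : ℕ} (ρ : Measure α)
    [IsProbabilityMeasure ρ] {f g : α → Pt d} (hf : Measurable f) (hg : Measurable g) :
    W2sq (ρ.map f) (ρ.map g) ≤ ∫⁻ a, ENNReal.ofReal (‖f a - g a‖ ^ 2) ∂ρ := by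
  have hfg : Measurable fun a => (f a, g a) := hf.prodMk hg
  refine sInf_le ⟨ρ.map fun a => (f a, g a),
    ⟨Measure.isProbabilityMeasure_map hfg.aemeasurable, ?_, ?_⟩, ?_⟩
  · rw [Measure.map_map measurable_fst hfg]; rfl
  · rw [Measure.map_map measurable_snd hfg]; rfl
  · rw [lintegral_map (by fun_prop) hfg]

theorem psi_map_wmean_le_mot {d N : ℕ} {μ : Fin N → Measure (Pt d)} {l : Fin N → ℝ}
    (hl : InSimplex l) {π : Measure (Fin N → Pt d)} (hπ : IsPlan μ π) :
    Psi l μ (π.map (wmean l)) ≤ MOT l π := by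
  have := hπ.1
  rw [Psi, mot_eq_lintegral l hl, lintegral_ofReal_sum_mul π (fun i => (hl.1 i).le)
    (f := fun i x => ‖x i - wmean l x‖ ^ 2)
    (fun i => ((measurable_pi_apply i).sub (measurable_wmean l)).norm.pow_const 2)
    (fun _ _ => sq_nonneg _)]
  refine Finset.sum_le_sum fun i _ => mul_le_mul_right ?_ _
  rw [← hπ.2 i]
  exact w2sq_map_le_lintegral π (measurable_pi_apply i) (measurable_wmean l)

namespace ProbabilityTheory.Kernel

variable {α ι : Type*} [MeasurableSpace α] [Fintype ι] {β : ι → Type*}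
  [∀ i, MeasurableSpace (β i)]

theorem measurable_measure_pi (κ : ∀ i, Kernel α (β i)) [∀ i, IsMarkovKernel (κ i)] :
    Measurable fun a => Measure.pi fun i => κ i a :=
  .measure_of_isPiSystem_of_isProbabilityMeasure generateFrom_pi.symm isPiSystem_pi <| by
    rintro _ ⟨s, hs, rfl⟩
    simp_rw [Measure.pi_pi]
    exact Finset.measurable_prod _ fun i _ => Kernel.measurable_coe _ (hs i (Set.mem_univ i))

protected noncomputable def pi (κ : ∀ i, Kernel α (β i)) [∀ i, IsMarkovKernel (κ i)] :
    Kernel α (∀ i, β i) :=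
  ⟨fun a => Measure.pi fun i => κ i a, measurable_measure_pi κ⟩

variable (κ : ∀ i, Kernel α (β i)) [∀ i, IsMarkovKernel (κ i)]

theorem pi_apply (a : α) : Kernel.pi κ a = Measure.pi fun i => κ i a := rfl

instance : IsMarkovKernel (Kernel.pi κ) :=
  ⟨fun a => by rw [pi_apply]; infer_instance⟩

theorem map_pi_eval (i : ι) : (Kernel.pi κ).map (Function.eval i) = κ i := by
  classical
  ext1 a
  rw [Kernel.map_apply _ (measurable_pi_apply i), pi_apply, Measure.pi_map_eval]
  simp

end ProbabilityTheory.Kernel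

open ProbabilityTheory in
theorem exists_gluing {α ι : Type*} [MeasurableSpace α] [Fintype ι] {β : ι → Type*}
    [∀ i, MeasurableSpace (β i)] [∀ i, StandardBorelSpace (β i)] [∀ i, Nonempty (β i)]
    (ν : Measure α) [IsProbabilityMeasure ν] (γ : ∀ i, Measure (α × β i))
    [∀ i, IsFiniteMeasure (γ i)] (hγ : ∀ i, (γ i).fst = ν) :
    ∃ θ : Measure (α × ∀ i, β i), IsProbabilityMeasure θ ∧
      ∀ i, θ.map (fun z => (z.1, z.2 i)) = γ i := by
  refine ⟨ν ⊗ₘ Kernel.pi fun i => (γ i).condKernel, inferInstance, fun i => ?_⟩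
  conv_rhs => rw [← Measure.disintegrate (γ i) (γ i).condKernel, hγ i,
    ← Kernel.map_pi_eval (fun i => (γ i).condKernel) i,
    Measure.compProd_map (measurable_pi_apply i)]
  rfl

theorem exists_isPlan_mot_le {d N : ℕ} {μ : Fin N → Measure (Pt d)} {l : Fin N → ℝ}
    (hl : InSimplex l) {ν : Measure (Pt d)} [IsProbabilityMeasure ν]
    {γ : Fin N → Measure (Pt d × Pt d)} (hγ : ∀ i, IsCoupling (μ i) ν (γ i)) :
    ∃ π, IsPlan μ π ∧
      MOT l π ≤ ∑ i, ENNReal.ofReal (l i) * ∫⁻ p, ENNReal.ofReal (‖p.1 - p.2‖ ^ 2) ∂γ i := by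
  have := fun i => (hγ i).1
  obtain ⟨θ, hθ, hθγ⟩ := exists_gluing ν (fun i => (γ i).map Prod.swap) fun i => by
    rw [Measure.fst, Measure.map_map measurable_fst measurable_swap]
    exact (hγ i).2.2
  have hmarg : ∀ i, θ.map (fun z => z.2 i) = μ i := fun i => by
    calc θ.map (fun z => z.2 i) = (θ.map fun z => (z.1, z.2 i)).map Prod.snd := by
          rw [Measure.map_map measurable_snd (by fun_prop)]; rfl
      _ = μ i := by
          rw [hθγ i, Measure.map_map measurable_snd measurable_swap]
          exact (hγ i).2.1
  have hcost : ∀ i, ∫⁻ z, ENNReal.ofReal (‖z.2 i - z.1‖ ^ 2) ∂θ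
      = ∫⁻ p, ENNReal.ofReal (‖p.1 - p.2‖ ^ 2) ∂γ i := fun i => by
    calc ∫⁻ z, ENNReal.ofReal (‖z.2 i - z.1‖ ^ 2) ∂θ
        = ∫⁻ p, ENNReal.ofReal (‖p.2 - p.1‖ ^ 2) ∂(θ.map fun z => (z.1, z.2 i)) := by
          rw [lintegral_map (by fun_prop) (by fun_prop)]
      _ = ∫⁻ p, ENNReal.ofReal (‖p.1 - p.2‖ ^ 2) ∂γ i := by
          rw [hθγ i, lintegral_map (by fun_prop) measurable_swap]
          rfl
  refine ⟨θ.map Prod.snd, ⟨Measure.isProbabilityMeasure_map (by fun_prop), fun i => ?_⟩, ?_⟩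
  · rw [Measure.map_map (measurable_pi_apply i) measurable_snd]
    exact hmarg i
  calc MOT l (θ.map Prod.snd)
      = ∫⁻ z, ENNReal.ofReal (∑ i, l i * ‖z.2 i - wmean l z.2‖ ^ 2) ∂θ := by
        rw [mot_eq_lintegral l hl, lintegral_map (by fun_prop) measurable_snd]
    _ ≤ ∫⁻ z, ENNReal.ofReal (∑ i, l i * ‖z.2 i - z.1‖ ^ 2) ∂θ :=
        lintegral_mono fun z => ENNReal.ofReal_le_ofReal <|
          sum_mul_norm_sub_wmean_sq_le hl.2 z.2 z.1
    _ = ∑ i, ENNReal.ofReal (l i) * ∫⁻ z, ENNReal.ofReal (‖z.2 i - z.1‖ ^ 2) ∂θ :=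
        lintegral_ofReal_sum_mul θ (fun i => (hl.1 i).le) (f := fun i z => ‖z.2 i - z.1‖ ^ 2)
          (fun i => by fun_prop) fun _ _ => sq_nonneg _
    _ = _ := by simp_rw [hcost]

theorem ENNReal.sum_iInf_eq_iInf_pi {ι : Type*} [Fintype ι] {κ : ι → Type*}
    [∀ i, Nonempty (κ i)] (f : ∀ i, κ i → ℝ≥0∞) :
    ∑ i, ⨅ j, f i j = ⨅ g : ∀ i, κ i, ∑ i, f i (g i) := by
  classical
  rw [ENNReal.iInf_sum (f := fun g i => f i (g i)) fun _ g g' =>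
    ⟨fun i => if f i (g i) ≤ f i (g' i) then g i else g' i, fun i _ => ?_⟩]
  · exact Finset.sum_congr rfl fun i _ => ((Function.surjective_eval i).iInf_comp (f i)).symm
  · dsimp only
    split_ifs with h
    · exact ⟨le_rfl, h⟩
    · exact ⟨(not_le.1 h).le, le_rfl⟩

theorem w2sq_eq_iInf {d : ℕ} (μ ν : Measure (Pt d)) :
    W2sq μ ν = ⨅ γ : {γ // IsCoupling μ ν γ}, ∫⁻ p, ENNReal.ofReal (‖p.1 - p.2‖ ^ 2) ∂γ.1 :=
  le_antisymm (le_iInf fun γ => sInf_le ⟨γ.1, γ.2, rfl⟩)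
    (le_sInf <| by rintro _ ⟨γ, hγ, rfl⟩; exact iInf_le_of_le ⟨γ, hγ⟩ le_rfl)

theorem isCoupling_prod {α : Type*} [MeasurableSpace α] (μ ν : Measure α)
    [IsProbabilityMeasure μ] [IsProbabilityMeasure ν] : IsCoupling μ ν (μ.prod ν) :=
  ⟨inferInstance, by simp, by simp⟩

theorem le_psi_of_forall_isPlan {d N : ℕ} {μ : Fin N → Measure (Pt d)}
    (hμ : ∀ i, IsProbabilityMeasure (μ i)) {l : Fin N → ℝ} (hl : InSimplex l)
    (ν : Measure (Pt d)) [IsProbabilityMeasure ν] {c : ℝ≥0∞}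
    (hc : ∀ π, IsPlan μ π → c ≤ MOT l π) : c ≤ Psi l μ ν := by
  have : ∀ i, Nonempty {γ // IsCoupling (μ i) ν γ} := fun i => ⟨⟨_, isCoupling_prod _ _⟩⟩
  simp_rw [Psi, w2sq_eq_iInf, ENNReal.mul_iInf_of_ne (ENNReal.ofReal_pos.2 (hl.1 _)).ne'
    ENNReal.ofReal_ne_top, ENNReal.sum_iInf_eq_iInf_pi]
  refine le_iInf fun γ => ?_
  obtain ⟨π, hπ, hle⟩ := exists_isPlan_mot_le hl fun i => (γ i).2
  exact (hc π hπ).trans hle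

/-- If `π̂` is an optimal plan for the MOT problem, then its pushforward
under the weighted mean map is an optimal Wasserstein-2 barycenter. -/
theorem stmt3 {d N : ℕ} (μ : Fin N → Measure (Pt d))
    (hμ : ∀ i, IsProbabilityMeasure (μ i) ∧ FinitelySupported (μ i))
    (l : Fin N → ℝ) (hl : InSimplex l)
    (pihat : Measure (Fin N → Pt d)) (hplan : IsPlan μ pihat)
    (hopt : ∀ π, IsPlan μ π → MOT l pihat ≤ MOT l π) :
    ∀ ν : Measure (Pt d), IsProbabilityMeasure ν →
      Psi l μ (pihat.map (wmean l)) ≤ Psi l μ ν := fun ν _ =>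
  (psi_map_wmean_le_mot hl hplan).trans (le_psi_of_forall_isPlan (fun i => (hμ i).1) hl ν hopt)
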